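/- Let α > 2, τ > 0, Δh > 0, and λ > 0 be real and let N_a be a positive integer. For positive integers N_U with 1 ≤ N_U ≤ N_a define w(N_U) := ω(N_U, α, τ/(N_a − N_U + 1)) with ω(N,α,t) := 1 + 2·∫_{1}^{∞} x · (1 − (1 + t·x^{−α})^{−N}) dx, and define CP†(N_U) := exp( −πλ·Δh²·( w(N_U) − 1 ) ) / w(N_U). Then CP†(1) > CP†(N_U) for every integer N_U with 2 ≤ N_U ≤ N_a. -/

import Mathlib

open MeasureTheory Set Real

/-- The interference functional `ω(N, α, t)` of the paper, in integral form. -/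
noncomputable def omegaFun (N : ℕ) (α t : ℝ) : ℝ :=
  1 + 2 * ∫ x in Ioi (1 : ℝ), x * (1 - ((1 + t * x ^ (-α)) ^ N)⁻¹)

/-- The approximate coverage probability of Proposition 1:
`CP†(N_U) = e^{−πλΔh²(w(N_U)−1)} / w(N_U)` with `w(N_U) = ω(N_U, α, τ/(Na − N_U + 1))`. -/
noncomputable def approxCP (Nu Na : ℕ) (α τ Δh lam : ℝ) : ℝ :=
  Real.exp (-(π * lam * Δh ^ 2 * (omegaFun Nu α (τ / ((Na : ℝ) - Nu + 1)) - 1))) /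
    omegaFun Nu α (τ / ((Na : ℝ) - Nu + 1))

/-! Because `α > 2`, the integrand of `ω(N, α, t)` is dominated by `N t x^{1-α}`, integrable on
`(1, ∞)`, and it is strictly increasing in `N` and in `t`. The effective threshold
`τ / (N_a - N_U + 1)` grows with `N_U`, so `w(1) < w(N_U)`, and `w ≥ 1`. Finally
`w ↦ e^{-c(w-1)} / w` is strictly decreasing on `(0, ∞)` for `c = πλΔh² ≥ 0`. -/

theorem MeasureTheory.setIntegral_lt_setIntegral_of_forall_lt {X : Type*} [MeasurableSpace X]
    {μ : Measure X} {s : Set X} {f g : X → ℝ} (hs : MeasurableSet s) (hμs : μ s ≠ 0)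
    (hf : IntegrableOn f s μ) (hg : IntegrableOn g s μ) (hfg : ∀ x ∈ s, f x < g x) :
    ∫ x in s, f x ∂μ < ∫ x in s, g x ∂μ := by
  have hsupp : s ⊆ Function.support fun x => g x - f x := fun x hx => (sub_pos.2 (hfg x hx)).ne'
  rw [← sub_pos, ← integral_sub hg hf, setIntegral_pos_iff_support_of_nonneg_ae
    (ae_restrict_of_forall_mem hs fun x hx => (sub_pos.2 (hfg x hx)).le) (hg.sub hf),
    inter_eq_right.2 hsupp]
  exact pos_iff_ne_zero.2 hμs

theorem one_sub_inv_one_add_pow_le {u : ℝ} (hu : 0 ≤ u) (N : ℕ) :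
    1 - ((1 + u) ^ N)⁻¹ ≤ N * u := by
  have hinv : 1 - u ≤ (1 + u)⁻¹ := by
    rw [← one_div, le_div_iff₀ (by linarith)]
    nlinarith
  have bernoulli : 1 + N * ((1 + u)⁻¹ - 1) ≤ ((1 + u) ^ N)⁻¹ := by
    rw [← inv_pow]
    exact one_add_mul_sub_le_pow (by linarith [inv_nonneg.2 (by linarith : (0 : ℝ) ≤ 1 + u)]) N
  calc 1 - ((1 + u) ^ N)⁻¹ ≤ N * (1 - (1 + u)⁻¹) := by linarith
    _ ≤ N * u := by gcongr; linarith

theorem Real.strictAntiOn_exp_neg_mul_sub_one_div {c : ℝ} (hc : 0 ≤ c) :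
    StrictAntiOn (fun w => exp (-(c * (w - 1))) / w) (Ioi 0) := by
  intro w₁ hw₁ w₂ hw₂ hw
  calc exp (-(c * (w₂ - 1))) / w₂ ≤ exp (-(c * (w₁ - 1))) / w₂ := by
        gcongr
        exact le_of_lt hw₂
    _ < exp (-(c * (w₁ - 1))) / w₁ := by
        gcongr

noncomputable def omegaIntegrand (N : ℕ) (α t x : ℝ) : ℝ :=
  x * (1 - ((1 + t * x ^ (-α)) ^ N)⁻¹)

theorem omegaFun_eq (N : ℕ) (α t : ℝ) :
    omegaFun N α t = 1 + 2 * ∫ x in Ioi (1 : ℝ), omegaIntegrand N α t x :=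
  rfl

section omegaIntegrand

variable {N : ℕ} {α t x : ℝ}

theorem omegaIntegrand_nonneg (ht : 0 ≤ t) (hx : 0 ≤ x) : 0 ≤ omegaIntegrand N α t x := by
  have hu : 0 ≤ t * x ^ (-α) := mul_nonneg ht (rpow_nonneg hx _)
  have hinv : ((1 + t * x ^ (-α)) ^ N)⁻¹ ≤ 1 := inv_le_one_of_one_le₀ (one_le_pow₀ (by linarith))
  exact mul_nonneg hx (by linarith)

theorem omegaIntegrand_le (ht : 0 ≤ t) (hx : 0 < x) :
    omegaIntegrand N α t x ≤ N * t * x ^ (1 - α) := by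
  calc omegaIntegrand N α t x ≤ x * (N * (t * x ^ (-α))) := by
        unfold omegaIntegrand
        gcongr
        exact one_sub_inv_one_add_pow_le (mul_nonneg ht (rpow_nonneg hx.le _)) N
    _ = N * t * x ^ (1 - α) := by
        rw [sub_eq_add_neg, rpow_add hx, rpow_one]
        ring

theorem measurable_omegaIntegrand : Measurable (omegaIntegrand N α t) := by
  unfold omegaIntegrand
  fun_prop

theorem integrableOn_omegaIntegrand (hα : 2 < α) (ht : 0 ≤ t) :
    IntegrableOn (omegaIntegrand N α t) (Ioi 1) := by
  have hdom := (integrableOn_Ioi_rpow_of_lt (a := 1 - α) (by linarith) one_pos).const_mul (N * t)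
  refine hdom.mono' measurable_omegaIntegrand.aestronglyMeasurable ?_
  filter_upwards [ae_restrict_mem measurableSet_Ioi] with x hx
  have hx0 : 0 < x := one_pos.trans hx
  rw [norm_of_nonneg (omegaIntegrand_nonneg ht hx0.le)]
  exact omegaIntegrand_le ht hx0

theorem omegaIntegrand_lt_omegaIntegrand {N₁ N₂ : ℕ} {t₁ t₂ : ℝ} (hN₁ : N₁ ≠ 0) (hN : N₁ ≤ N₂)
    (ht₁ : 0 ≤ t₁) (ht : t₁ < t₂) (hx : 0 < x) :
    omegaIntegrand N₁ α t₁ x < omegaIntegrand N₂ α t₂ x := by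
  have hxα : 0 < x ^ (-α) := rpow_pos_of_pos hx _
  have hpow : (1 + t₁ * x ^ (-α)) ^ N₁ < (1 + t₂ * x ^ (-α)) ^ N₂ :=
    calc (1 + t₁ * x ^ (-α)) ^ N₁ < (1 + t₂ * x ^ (-α)) ^ N₁ := by
          gcongr
      _ ≤ (1 + t₂ * x ^ (-α)) ^ N₂ := pow_le_pow_right₀ (by nlinarith) hN
  unfold omegaIntegrand
  gcongr

end omegaIntegrand

theorem one_le_omegaFun (N : ℕ) {α t : ℝ} (ht : 0 ≤ t) : 1 ≤ omegaFun N α t := by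
  have := setIntegral_nonneg (μ := volume) measurableSet_Ioi fun x (hx : 1 < x) =>
    omegaIntegrand_nonneg (N := N) (α := α) ht (one_pos.trans hx).le
  rw [omegaFun_eq]
  linarith

theorem omegaFun_lt_omegaFun {N₁ N₂ : ℕ} {α t₁ t₂ : ℝ} (hα : 2 < α) (hN₁ : N₁ ≠ 0)
    (hN : N₁ ≤ N₂) (ht₁ : 0 ≤ t₁) (ht : t₁ < t₂) : omegaFun N₁ α t₁ < omegaFun N₂ α t₂ := by
  have := setIntegral_lt_setIntegral_of_forall_lt measurableSet_Ioi (by simp)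
    (integrableOn_omegaIntegrand hα ht₁) (integrableOn_omegaIntegrand hα (ht₁.trans ht.le))
    fun x (hx : 1 < x) => omegaIntegrand_lt_omegaIntegrand hN₁ hN ht₁ ht (one_pos.trans hx)
  rw [omegaFun_eq, omegaFun_eq]
  linarith

theorem SU_BF_maximizes_coverage_probability_general
    (α τ Δh lam : ℝ) (hα : 2 < α) (hτ : 0 < τ) (hlam : 0 < lam)
    (Na : ℕ) :
    ∀ Nu : ℕ, 2 ≤ Nu → Nu ≤ Na →
      approxCP Nu Na α τ Δh lam < approxCP 1 Na α τ Δh lam := by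
  intro Nu hNu hNuNa
  have hNu' : (2 : ℝ) ≤ Nu := by exact_mod_cast hNu
  have hNuNa' : (Nu : ℝ) ≤ Na := by exact_mod_cast hNuNa
  have hthreshold : τ / ((Na : ℝ) - 1 + 1) < τ / ((Na : ℝ) - Nu + 1) :=
    div_lt_div_of_pos_left hτ (by linarith) (by linarith)
  have homega := omegaFun_lt_omegaFun hα one_ne_zero (one_le_two.trans hNu)
    (div_nonneg hτ.le (by linarith)) hthreshold
  have hone := one_le_omegaFun 1 (α := α) (div_nonneg hτ.le (by linarith : (0 : ℝ) ≤ Na - 1 + 1))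
  simpa only [approxCP, Nat.cast_one] using strictAntiOn_exp_neg_mul_sub_one_div
    (c := π * lam * Δh ^ 2) (by positivity) (one_pos.trans_le hone)
    (one_pos.trans_le (hone.trans homega.le)) homega

/-- for `α > 2`, `τ > 0`, `Δh > 0`, `λ > 0` and a positive integer `Na`,
single-user beamforming (`N_U = 1`) achieves strictly higher approximate coverage
probability than SDMA or full SDMA with `2 ≤ N_U ≤ Na`. -/
theorem SU_BF_maximizes_coverage_probability
    (α τ Δh lam : ℝ) (hα : 2 < α) (hτ : 0 < τ) (hΔh : 0 < Δh) (hlam : 0 < lam)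
    (Na : ℕ) (hNa : 0 < Na) :
    ∀ Nu : ℕ, 2 ≤ Nu → Nu ≤ Na →
      approxCP Nu Na α τ Δh lam < approxCP 1 Na α τ Δh lam :=
  SU_BF_maximizes_coverage_probability_general α τ Δh lam hα hτ hlam Na
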